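/- (Theorem 1(i)) If q < b/(a+b), then H_q minimizes the expected misclassification cost L_{a,b} among all RDCs with predicted positive rate at least α: for every RDC H with E[H] ≥ α, L_{a,b}(H_q) ≤ L_{a,b}(H). -/

import Mathlib

open MeasureTheory Set

/-- A randomized decision classifier (RDC): an `ℋ`-measurable random variable
with values in the unit interval. -/
def IsRDC {Ω : Type*} (ℋ : MeasurableSpace Ω) (H : Ω → ℝ) : Prop :=
  Measurable[ℋ] H ∧ ∀ ω, H ω ∈ Set.Icc (0 : ℝ) 1

/-- The optimal RDC `H_q` obtained by thresholding the posterior probability `η` at `q`,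
with randomization on the event `{η = q}` calibrated so that the predicted positive
rate equals `α`. -/
noncomputable def Hq {Ω : Type*} [MeasurableSpace Ω] (P : Measure Ω) (η : Ω → ℝ)
    (α q : ℝ) : Ω → ℝ := fun ω =>
  if P {ω' | η ω' = q} = 0 then {ω' | η ω' > q}.indicator (fun _ => (1 : ℝ)) ω
  else {ω' | η ω' > q}.indicator (fun _ => (1 : ℝ)) ω +
    ((α - (P {ω' | η ω' > q}).toReal) / (P {ω' | η ω' = q}).toReal) *
      {ω' | η ω' = q}.indicator (fun _ => (1 : ℝ)) ω

/-- Expected misclassification cost `L_{a,b}(H) = a·E[(1−H)·1_A] + b·E[H·1_{Aᶜ}]`. -/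
noncomputable def cost {Ω : Type*} [MeasurableSpace Ω] (P : Measure Ω) (A : Set Ω)
    (a b : ℝ) (H : Ω → ℝ) : ℝ :=
  a * ∫ ω, (1 - H ω) * A.indicator (fun _ => (1 : ℝ)) ω ∂P +
    b * ∫ ω, H ω * Aᶜ.indicator (fun _ => (1 : ℝ)) ω ∂P

/-!
By the defining property of `η = P[A | ℋ]`, every RDC `F` has cost
`a P(A) + b E[F] - (a + b) E[η F]`. Since `H_q` vanishes where `η < q` and equals `1` where
`η > q`, we have `(H_q - H)(η - q) ≥ 0` pointwise for every RDC `H`, hence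
`E[η H_q] - E[η H] ≥ q (E[H_q] - E[H]) = q (α - E[H])`. Therefore
`L(H_q) - L(H) ≤ (b - (a + b) q)(α - E[H]) ≤ 0` whenever `q < b / (a + b)` and `E[H] ≥ α`.
-/

section

variable {Ω : Type*}

namespace IsRDC

variable {ℋ : MeasurableSpace Ω} {F G : Ω → ℝ}

lemma abs_le_one (hF : IsRDC ℋ F) (ω : Ω) : |F ω| ≤ 1 :=
  abs_le.2 ⟨by linarith [(hF.2 ω).1], (hF.2 ω).2⟩

lemma mul (hF : IsRDC ℋ F) (hG : IsRDC ℋ G) : IsRDC ℋ (fun ω => F ω * G ω) :=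
  ⟨hF.1.mul hG.1, fun ω => ⟨mul_nonneg (hF.2 ω).1 (hG.2 ω).1,
    mul_le_one₀ (hF.2 ω).2 (hG.2 ω).1 (hG.2 ω).2⟩⟩

lemma integrable [𝒜 : MeasurableSpace Ω] (hℋ : ℋ ≤ 𝒜) (P : Measure Ω) [IsFiniteMeasure P]
    (hF : IsRDC ℋ F) : Integrable F P :=
  .of_bound (hF.1.mono hℋ le_rfl).aestronglyMeasurable 1 (ae_of_all _ hF.abs_le_one)

end IsRDC

section Probability

variable [MeasurableSpace Ω] {P : Measure Ω} {X : Ω → ℝ}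

lemma measureReal_le_eq_lt_add_eq [IsFiniteMeasure P] (hX : Measurable X) (q : ℝ) :
    P.real {ω | X ω ≤ q} = P.real {ω | X ω < q} + P.real {ω | X ω = q} := by
  rw [← measureReal_union (disjoint_left.2 fun ω h₁ h₂ => h₁.ne h₂)
    (show MeasurableSet {ω | X ω = q} from hX (measurableSet_singleton q))]
  congr 1
  ext ω
  exact le_iff_lt_or_eq (a := X ω)

lemma probReal_gt_eq_one_sub_le [IsProbabilityMeasure P] (hX : Measurable X) (q : ℝ) :
    P.real {ω | X ω > q} = 1 - P.real {ω | X ω ≤ q} := by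
  rw [← probReal_compl_eq_one_sub (measurableSet_le hX measurable_const)]
  congr 1
  ext ω
  simp

end Probability

section Hq

variable {ℋ : MeasurableSpace Ω} [MeasurableSpace Ω] {P : Measure Ω} {η : Ω → ℝ} {α q : ℝ}

lemma Hq_of_lt {ω : Ω} (h : η ω < q) : Hq P η α q ω = 0 := by
  simp [Hq, h.not_gt, h.ne]

lemma Hq_of_gt {ω : Ω} (h : q < η ω) : Hq P η α q ω = 1 := by
  simp [Hq, h, h.ne']

lemma measurable_Hq (hη : Measurable[ℋ] η) :
    Measurable[ℋ] (Hq P η α q) := by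
  have hgt : MeasurableSet[ℋ] {ω | η ω > q} := hη measurableSet_Ioi
  have heq : MeasurableSet[ℋ] {ω | η ω = q} := hη (measurableSet_singleton q)
  unfold Hq
  split_ifs
  · exact measurable_const.indicator hgt
  · exact (measurable_const.indicator hgt).add ((measurable_const.indicator heq).const_mul _)

lemma Hq_mem_Icc [IsProbabilityMeasure P] (hη : Measurable η)
    (hq₁ : P.real {ω | η ω < q} ≤ 1 - α) (hq₂ : 1 - α ≤ P.real {ω | η ω ≤ q}) (ω : Ω) :
    Hq P η α q ω ∈ Icc 0 1 := by
  rcases lt_trichotomy (η ω) q with h | h | h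
  · simp [Hq_of_lt h]
  · have hle := measureReal_le_eq_lt_add_eq (P := P) hη q
    have hgt := probReal_gt_eq_one_sub_le (P := P) hη q
    have h₁ : {ω' | η ω' > q}.indicator (fun _ => (1 : ℝ)) ω = 0 :=
      indicator_of_notMem (show ω ∉ {ω' | η ω' > q} from h.not_gt) _
    have h₂ : {ω' | η ω' = q}.indicator (fun _ => (1 : ℝ)) ω = 1 :=
      indicator_of_mem (show ω ∈ {ω' | η ω' = q} from h) _
    simp only [Hq, h₁, h₂, ← measureReal_def, zero_add, mul_one]
    split_ifs with h0
    · simp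
    · have hpos : 0 < P.real {ω | η ω = q} := ENNReal.toReal_pos h0 (measure_ne_top P _)
      exact ⟨div_nonneg (by linarith) hpos.le, (div_le_one hpos).2 (by linarith)⟩
  · simp [Hq_of_gt h]

lemma integral_Hq [IsProbabilityMeasure P] (hη : Measurable η)
    (hq₁ : P.real {ω | η ω < q} ≤ 1 - α) (hq₂ : 1 - α ≤ P.real {ω | η ω ≤ q}) :
    ∫ ω, Hq P η α q ω ∂P = α := by
  have hle := measureReal_le_eq_lt_add_eq (P := P) hη q
  have hgt := probReal_gt_eq_one_sub_le (P := P) hη q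
  have hgtm : MeasurableSet {ω | η ω > q} := measurableSet_lt measurable_const hη
  have heqm : MeasurableSet {ω | η ω = q} := hη (measurableSet_singleton q)
  unfold Hq
  split_ifs with h0
  · have hnull : P.real {ω | η ω = q} = 0 := by simp [measureReal_def, h0]
    rw [integral_indicator_const _ hgtm, smul_eq_mul, mul_one]
    linarith
  · have hpos : P.real {ω | η ω = q} ≠ 0 := ENNReal.toReal_ne_zero.2 ⟨h0, measure_ne_top P _⟩
    rw [integral_add ((integrable_const 1).indicator hgtm)
      (((integrable_const 1).indicator heqm).const_mul _), integral_const_mul,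
      integral_indicator_const _ hgtm, integral_indicator_const _ heqm]
    simp only [smul_eq_mul, mul_one]
    rw [← measureReal_def, ← measureReal_def, div_mul_cancel₀ _ hpos]
    ring

end Hq

section Cost

variable [MeasurableSpace Ω] {P : Measure Ω} {A : Set Ω} {F : Ω → ℝ}

lemma cost_eq_sub_integral_indicator_mul [IsFiniteMeasure P] (hA : MeasurableSet A) (a b : ℝ)
    (hF : Integrable F P) :
    cost P A a b F = a * P.real A + b * ∫ ω, F ω ∂P
      - (a + b) * ∫ ω, A.indicator (fun _ => (1 : ℝ)) ω * F ω ∂P := by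
  have hAF : Integrable (fun ω => A.indicator (fun _ => (1 : ℝ)) ω * F ω) P := by
    simpa only [← indicator_mul_left, one_mul] using hF.indicator hA
  have h₁ : ∫ ω, (1 - F ω) * A.indicator (fun _ => (1 : ℝ)) ω ∂P
      = P.real A - ∫ ω, A.indicator (fun _ => (1 : ℝ)) ω * F ω ∂P := by
    calc ∫ ω, (1 - F ω) * A.indicator (fun _ => (1 : ℝ)) ω ∂P
        = ∫ ω, A.indicator (fun _ => (1 : ℝ)) ω - A.indicator (fun _ => (1 : ℝ)) ω * F ω ∂P := by
          congr 1 with ω; ring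
      _ = _ := by
          rw [integral_sub ((integrable_const 1).indicator hA) hAF,
            integral_indicator_const _ hA, smul_eq_mul, mul_one]
  have h₂ : ∫ ω, F ω * Aᶜ.indicator (fun _ => (1 : ℝ)) ω ∂P
      = ∫ ω, F ω ∂P - ∫ ω, A.indicator (fun _ => (1 : ℝ)) ω * F ω ∂P := by
    rw [← integral_sub hF hAF]
    congr 1 with ω
    by_cases h : ω ∈ A <;> simp [h]
  rw [cost, h₁, h₂]
  ring

end Cost

lemma mul_integral_sub_le_integral_mul_sub [MeasurableSpace Ω] {P : Measure Ω}
    {η g H : Ω → ℝ} {q : ℝ} (hg : Integrable g P) (hH : Integrable H P)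
    (hηg : Integrable (fun ω => η ω * g ω) P) (hηH : Integrable (fun ω => η ω * H ω) P)
    (hg₀ : ∀ ω, η ω < q → g ω = 0) (hg₁ : ∀ ω, q < η ω → g ω = 1)
    (hH01 : ∀ ω, H ω ∈ Icc 0 1) :
    q * (∫ ω, g ω ∂P - ∫ ω, H ω ∂P) ≤ ∫ ω, η ω * g ω ∂P - ∫ ω, η ω * H ω ∂P := by
  have hpt : ∀ ω, 0 ≤ (η ω * g ω - η ω * H ω) - q * (g ω - H ω) := by
    intro ω
    rcases lt_trichotomy (η ω) q with h | h | h
    · rw [hg₀ ω h]; nlinarith [(hH01 ω).1]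
    · exact le_of_eq (by rw [h]; ring)
    · rw [hg₁ ω h]; nlinarith [(hH01 ω).2]
  have hint := integral_nonneg (μ := P)
    (f := fun ω => (η ω * g ω - η ω * H ω) - q * (g ω - H ω)) hpt
  have hηgH : Integrable (fun ω => η ω * g ω - η ω * H ω) P := hηg.sub hηH
  have hgH : Integrable (fun ω => g ω - H ω) P := hg.sub hH
  rw [integral_sub hηgH (hgH.const_mul q), integral_sub hηg hηH,
    integral_const_mul, integral_sub hg hH] at hint
  linarith

end

theorem Hq_min_cost_of_rate_ge_general
    {Ω : Type*} (ℋ : MeasurableSpace Ω) [𝒜 : MeasurableSpace Ω]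
    (P : Measure Ω) [IsProbabilityMeasure P] (hℋ : ℋ ≤ 𝒜)
    (A : Set Ω) (hA : MeasurableSet A)
    (η : Ω → ℝ) (hηm : Measurable[ℋ] η) (hη01 : ∀ ω, η ω ∈ Set.Icc (0 : ℝ) 1)
    (hηcond : ∀ Z : Ω → ℝ, Measurable[ℋ] Z → (∃ C, ∀ ω, |Z ω| ≤ C) →
      ∫ ω, η ω * Z ω ∂P = ∫ ω, A.indicator (fun _ => (1 : ℝ)) ω * Z ω ∂P)
    (α : ℝ)
    (q : ℝ) (hq₁ : (P {ω | η ω < q}).toReal ≤ 1 - α)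
    (hq₂ : 1 - α ≤ (P {ω | η ω ≤ q}).toReal)
    (a b : ℝ) (hab : 0 < a + b)
    (hqlt : q < b / (a + b)) :
    ∀ H : Ω → ℝ, IsRDC ℋ H → α ≤ ∫ ω, H ω ∂P →
      cost P A a b (Hq P η α q) ≤ cost P A a b H := by
  intro H hH hHα
  have hη : IsRDC ℋ η := ⟨hηm, hη01⟩
  have hη𝒜 : Measurable η := hηm.mono hℋ le_rfl
  have hg : IsRDC ℋ (Hq P η α q) := ⟨measurable_Hq hηm, Hq_mem_Icc hη𝒜 hq₁ hq₂⟩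
  have hcost : ∀ F, IsRDC ℋ F →
      cost P A a b F = a * P.real A + b * ∫ ω, F ω ∂P - (a + b) * ∫ ω, η ω * F ω ∂P :=
    fun F hF => by
      rw [cost_eq_sub_integral_indicator_mul hA a b (hF.integrable hℋ P),
        hηcond F hF.1 ⟨1, hF.abs_le_one⟩]
  have hkey := mul_integral_sub_le_integral_mul_sub (hg.integrable hℋ P) (hH.integrable hℋ P)
    ((hη.mul hg).integrable hℋ P) ((hη.mul hH).integrable hℋ P)
    (fun _ => Hq_of_lt) (fun _ => Hq_of_gt) hH.2
  rw [integral_Hq hη𝒜 hq₁ hq₂] at hkey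
  rw [hcost _ hg, hcost H hH, integral_Hq hη𝒜 hq₁ hq₂]
  have hqb : q * (a + b) < b := (lt_div_iff₀ hab).1 hqlt
  linarith [mul_le_mul_of_nonneg_left hkey hab.le,
    mul_nonneg (sub_nonneg.2 hqb.le) (sub_nonneg.2 hHα)]

/-- Theorem 1(i). If `q < b/(a+b)` then `H_q` minimizes the
expected misclassification cost among all RDCs with predicted positive rate at least `α`. -/
theorem Hq_min_cost_of_rate_ge
    {Ω : Type*} (ℋ : MeasurableSpace Ω) [𝒜 : MeasurableSpace Ω]
    (P : Measure Ω) [IsProbabilityMeasure P] (hℋ : ℋ ≤ 𝒜)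
    (A : Set Ω) (hA : MeasurableSet A) (hA0 : 0 < P A) (hA1 : P A < 1)
    (hAH : ¬ MeasurableSet[ℋ] A)
    (η : Ω → ℝ) (hηm : Measurable[ℋ] η) (hη01 : ∀ ω, η ω ∈ Set.Icc (0 : ℝ) 1)
    (hηcond : ∀ Z : Ω → ℝ, Measurable[ℋ] Z → (∃ C, ∀ ω, |Z ω| ≤ C) →
      ∫ ω, η ω * Z ω ∂P = ∫ ω, A.indicator (fun _ => (1 : ℝ)) ω * Z ω ∂P)
    (α : ℝ) (hα : α ∈ Set.Ioo (0 : ℝ) 1)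
    (q : ℝ) (hq₁ : (P {ω | η ω < q}).toReal ≤ 1 - α)
    (hq₂ : 1 - α ≤ (P {ω | η ω ≤ q}).toReal)
    (a b : ℝ) (ha : 0 ≤ a) (hb : 0 ≤ b) (hab : 0 < a + b)
    (hqlt : q < b / (a + b)) :
    ∀ H : Ω → ℝ, IsRDC ℋ H → α ≤ ∫ ω, H ω ∂P →
      cost P A a b (Hq P η α q) ≤ cost P A a b H :=
  Hq_min_cost_of_rate_ge_general ℋ (𝒜 := 𝒜) P hℋ A hA η hηm hη01 hηcond α q hq₁ hq₂ a b hab hqlt
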